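/- arXiv:math/9906058 — 2 statements merged into one kernel-verified Lean document; each statement's English description precedes it below -/
import Mathlib

section
/- Let n ≥ 2 be an integer and define F : (−1, 1) → ℝ by F(r) = ⨍_{−1}^{1} T_n(s)·√(1−s²)/(s−r) ds (Cauchy principal value). Then F is differentiable at every r ∈ (−1, 1) and F′(r) = (π/2)·[ (n−1)·U_{n−2}(r) − (n+1)·U_n(r) ]. (F′(r) is the Hadamard finite-part integral ⨎_{−1}^{1} T_n(s)·√(1−s²)/(s−r)² ds.) -/
/-!
Since `2 T_n = U_n - U_{n-2}`, it suffices to know the principal values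
`⨍_{-1}^1 U_k(s) √(1 - s²) / (s - r) ds = -π T_{k+1}(r)`. These follow by induction from
`U_{k+2} = 2 X U_{k+1} - U_k`, using `s / (s - r) = 1 + r / (s - r)` and
`∫_{-1}^1 U_k(s) √(1 - s²) ds = 0` for `k ≥ 1`. The base case
`⨍ √(1 - s²) / (s - r) ds = -π r` comes from an explicit primitive whose singular part
`√(1 - r²) log |s - r|` is even about `r`, so it cancels in the symmetric truncation.
Hence `F = (π/2) (T_{n-1} - T_{n+1})` on `(-1, 1)`, and `T_k' = k U_{k-1}` gives the derivative.
-/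

open Polynomial Polynomial.Chebyshev Real MeasureTheory Filter Set Topology

theorem hasDerivAt_sqrt_one_sub_sq {s : ℝ} (hs : s ∈ Ioo (-1 : ℝ) 1) :
    HasDerivAt (fun x : ℝ => √(1 - x ^ 2)) (-s / √(1 - s ^ 2)) s := by
  have hpos : 0 < 1 - s ^ 2 := by nlinarith [hs.1, hs.2]
  have h := (Real.hasDerivAt_sqrt hpos.ne').comp s ((hasDerivAt_pow 2 s).const_sub 1)
  refine h.congr_deriv ?_
  field_simp
  ring

theorem hasDerivAt_sqrt_one_sub_sq_mul_U (k : ℤ) {s : ℝ} (hs : s ∈ Ioo (-1 : ℝ) 1) :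
    HasDerivAt (fun x : ℝ => √(1 - x ^ 2) * (U ℝ k).eval x)
      (-((k : ℝ) + 1) * (T ℝ (k + 1)).eval s / √(1 - s ^ 2)) s := by
  have hpos : 0 < 1 - s ^ 2 := by nlinarith [hs.1, hs.2]
  have hsq : √(1 - s ^ 2) ^ 2 = 1 - s ^ 2 := Real.sq_sqrt hpos.le
  have hid := congr_arg (eval s) (add_one_mul_T_eq_poly_in_U (R := ℝ) k)
  simp only [eval_mul, eval_add, eval_sub, eval_one, eval_X, eval_pow, eval_intCast] at hid
  refine ((hasDerivAt_sqrt_one_sub_sq hs).mul (Polynomial.hasDerivAt (U ℝ k) s)).congr_deriv ?_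
  field_simp
  linear_combination hid + eval s (derivative (U ℝ k)) * hsq

theorem integral_U_mul_sqrt_one_sub_sq {k : ℕ} (hk : 0 < k) :
    ∫ s in (-1 : ℝ)..1, (U ℝ k).eval s * √(1 - s ^ 2) = 0 := by
  -- `(1 - x²) U_k = (T_k - T_{k+2}) / 2`, and `T_j / √(1 - x²)` is the derivative of
  -- `-√(1 - x²) U_{j-1} / j`; the primitive vanishes at `±1`.
  set G : ℝ → ℝ := fun x => (√(1 - x ^ 2) * (U ℝ (k + 1)).eval x / (k + 2)
    - √(1 - x ^ 2) * (U ℝ (k - 1)).eval x / k) / 2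
  have hderiv : ∀ s ∈ Ioo (-1 : ℝ) 1, HasDerivAt G ((U ℝ k).eval s * √(1 - s ^ 2)) s := by
    intro s hs
    have hpos : 0 < 1 - s ^ 2 := by nlinarith [hs.1, hs.2]
    have hsq : √(1 - s ^ 2) ^ 2 = 1 - s ^ 2 := Real.sq_sqrt hpos.le
    have h₁ := congr_arg (eval s) (one_sub_X_sq_mul_U_eq_pol_in_T (R := ℝ) k)
    have h₂ := congr_arg (eval s) (T_add_two ℝ k)
    simp only [eval_mul, eval_sub, eval_one, eval_X, eval_pow, eval_ofNat] at h₁ h₂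
    have hT : (T ℝ k).eval s - (T ℝ (k + 2)).eval s =
        2 * (U ℝ k).eval s * √(1 - s ^ 2) ^ 2 := by
      linear_combination -2 * (U ℝ k).eval s * hsq - 2 * h₁ + h₂
    refine (((hasDerivAt_sqrt_one_sub_sq_mul_U ((k : ℤ) + 1) hs).div_const (k + 2)).sub
      ((hasDerivAt_sqrt_one_sub_sq_mul_U ((k : ℤ) - 1) hs).div_const k)).div_const 2
      |>.congr_deriv ?_
    rw [sub_add_cancel, show (k : ℤ) + 1 + 1 = k + 2 by ring]
    push_cast
    field_simp
    linear_combination ((k : ℝ) ^ 2 + 2 * k) * hT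
  have hcont : Continuous fun x : ℝ => √(1 - x ^ 2) := by fun_prop
  have hG : Continuous G := by fun_prop
  rw [intervalIntegral.integral_eq_sub_of_hasDerivAt_of_le (by norm_num) hG.continuousOn hderiv
    (((U ℝ k).continuous.mul hcont).intervalIntegrable _ _)]
  simp [G]

noncomputable def truncIntegral (f : ℝ → ℝ) (r ε : ℝ) : ℝ :=
  (∫ s in (-1 : ℝ)..(r - ε), f s) + ∫ s in (r + ε)..1, f s

theorem tendsto_truncIntegral_of_continuous {f : ℝ → ℝ} (hf : Continuous f) (r : ℝ) :
    Tendsto (truncIntegral f r) (𝓝[>] 0) (𝓝 (∫ s in (-1 : ℝ)..1, f s)) := by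
  have hint : ∀ a b : ℝ, IntervalIntegrable f volume a b := hf.intervalIntegrable
  set P : ℝ → ℝ := fun b => ∫ s in (-1 : ℝ)..b, f s
  have hP : Continuous P := intervalIntegral.continuous_primitive hint (-1)
  have hP_eq : truncIntegral f r = fun ε => P (r - ε) + (P 1 - P (r + ε)) := by
    ext ε
    rw [truncIntegral, intervalIntegral.integral_interval_sub_left (hint _ _) (hint _ _)]
  have hlim : Tendsto (fun ε => P (r - ε) + (P 1 - P (r + ε))) (𝓝 0) (𝓝 (P 1)) := by
    have hcont : Continuous fun ε => P (r - ε) + (P 1 - P (r + ε)) := by fun_prop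
    simpa using hcont.tendsto 0
  exact hP_eq ▸ hlim.mono_left nhdsWithin_le_nhds

section Truncation

variable {f g : ℝ → ℝ} {r ε : ℝ}

theorem notMem_uIcc_neg_one_sub (hr : -1 < r) (hε : 0 < ε) : r ∉ uIcc (-1) (r - ε) := by
  rw [mem_uIcc]; intro h; rcases h with h | h <;> linarith [h.1, h.2]

theorem notMem_uIcc_add_one (hr : r < 1) (hε : 0 < ε) : r ∉ uIcc (r + ε) 1 := by
  rw [mem_uIcc]; intro h; rcases h with h | h <;> linarith [h.1, h.2]

theorem intervalIntegrable_of_continuousOn_compl {a b : ℝ} (hf : ContinuousOn f {r}ᶜ)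
    (h : r ∉ uIcc a b) : IntervalIntegrable f volume a b :=
  (hf.mono fun _ hx hxr => h (hxr ▸ hx)).intervalIntegrable

theorem truncIntegral_congr (hr : r ∈ Ioo (-1 : ℝ) 1) (hε : 0 < ε) (h : EqOn f g {r}ᶜ) :
    truncIntegral f r ε = truncIntegral g r ε := by
  have hsub : ∀ {a b}, r ∉ uIcc a b → EqOn f g (uIcc a b) := fun hab _ hx =>
    h fun hxr => hab (hxr ▸ hx)
  rw [truncIntegral, truncIntegral,
    intervalIntegral.integral_congr (hsub (notMem_uIcc_neg_one_sub hr.1 hε)),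
    intervalIntegral.integral_congr (hsub (notMem_uIcc_add_one hr.2 hε))]

theorem truncIntegral_add (hr : r ∈ Ioo (-1 : ℝ) 1) (hε : 0 < ε) (hf : ContinuousOn f {r}ᶜ)
    (hg : ContinuousOn g {r}ᶜ) :
    truncIntegral (f + g) r ε = truncIntegral f r ε + truncIntegral g r ε := by
  have hl := notMem_uIcc_neg_one_sub hr.1 hε
  have hr' := notMem_uIcc_add_one hr.2 hε
  simp only [truncIntegral, Pi.add_apply]
  rw [intervalIntegral.integral_add (intervalIntegrable_of_continuousOn_compl hf hl)
      (intervalIntegrable_of_continuousOn_compl hg hl),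
    intervalIntegral.integral_add (intervalIntegrable_of_continuousOn_compl hf hr')
      (intervalIntegrable_of_continuousOn_compl hg hr')]
  ring

theorem truncIntegral_const_mul (c : ℝ) :
    truncIntegral (fun s => c * f s) r ε = c * truncIntegral f r ε := by
  simp only [truncIntegral, intervalIntegral.integral_const_mul, mul_add]

end Truncation

theorem tendsto_truncIntegral_of_hasDerivAt_add_log {f φ : ℝ → ℝ} {r c : ℝ}
    (hr : r ∈ Ioo (-1 : ℝ) 1) (hf : ContinuousOn f {r}ᶜ) (hφ : ContinuousOn φ (Icc (-1) 1))
    (hderiv : ∀ x ∈ Ioo (-1 : ℝ) 1, x ≠ r →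
      HasDerivAt (fun y => φ y + c * log (y - r)) (f x) x) :
    Tendsto (truncIntegral f r) (𝓝[>] 0)
      (𝓝 (φ 1 - φ (-1) + c * (log (1 - r) - log (1 + r)))) := by
  set G : ℝ → ℝ := fun y => φ y + c * log (y - r)
  have hFTC : ∀ a b : ℝ, -1 ≤ a → a ≤ b → b ≤ 1 → r ∉ Icc a b →
      ∫ s in a..b, f s = G b - G a := by
    intro a b ha hab hb hrab
    have hne : ∀ x ∈ Icc a b, x - r ≠ 0 := fun x hx => sub_ne_zero.2 fun h => hrab (h ▸ hx)
    refine intervalIntegral.integral_eq_sub_of_hasDerivAt_of_le hab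
      ((hφ.mono (Icc_subset_Icc ha hb)).add
        (continuousOn_const.mul ((continuousOn_id.sub continuousOn_const).log hne)))
      (fun x hx => hderiv x ⟨ha.trans_lt hx.1, hx.2.trans_le hb⟩
        fun h => hrab (h ▸ Ioo_subset_Icc_self hx))
      (intervalIntegrable_of_continuousOn_compl hf (by rwa [uIcc_of_le hab]))
  -- the logarithmic singularities at `r ∓ ε` cancel: `log (-ε) = log ε` for `Real.log`
  have heq : ∀ᶠ ε in 𝓝[>] 0,
      G 1 - G (-1) + (φ (r - ε) - φ (r + ε)) = truncIntegral f r ε := by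
    filter_upwards [Ioo_mem_nhdsGT (lt_min (neg_lt_iff_pos_add'.1 hr.1) (sub_pos.2 hr.2))]
      with ε ⟨hε, hεr⟩
    have h₁ := hεr.trans_le (min_le_left _ _)
    have h₂ := hεr.trans_le (min_le_right _ _)
    rw [truncIntegral, hFTC _ _ le_rfl (by linarith) (by linarith) fun h => by linarith [h.2],
      hFTC _ _ (by linarith) (by linarith) le_rfl fun h => by linarith [h.1]]
    simp only [G, show r - ε - r = -ε by ring, show r + ε - r = ε by ring, log_neg_eq_log]
    ring
  have hG : G 1 - G (-1) = φ 1 - φ (-1) + c * (log (1 - r) - log (1 + r)) := by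
    simp only [G, show (-1 : ℝ) - r = -(1 + r) by ring, log_neg_eq_log]
    ring
  have hφr : ContinuousAt φ r := hφ.continuousAt (Icc_mem_nhds hr.1 hr.2)
  have hlim : Tendsto (fun ε => φ (r - ε) - φ (r + ε)) (𝓝 0) (𝓝 0) := by
    have h₁ : Tendsto (fun ε : ℝ => r - ε) (𝓝 0) (𝓝 r) := by
      simpa using (continuous_sub_left r).tendsto 0
    have h₂ : Tendsto (fun ε : ℝ => r + ε) (𝓝 0) (𝓝 r) := by
      simpa using (continuous_const_add r).tendsto 0
    simpa using (hφr.tendsto.comp h₁).sub (hφr.tendsto.comp h₂)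
  rw [← hG]
  simpa using (tendsto_const_nhds.add (hlim.mono_left nhdsWithin_le_nhds)).congr' heq

noncomputable def cauchyIntegrand (p : ℝ[X]) (r s : ℝ) : ℝ :=
  p.eval s * √(1 - s ^ 2) / (s - r)

/-- `HasCauchyPV p r L`: the principal value `⨍_{-1}^1 p(s) √(1 - s²) / (s - r) ds` is `L`. -/
def HasCauchyPV (p : ℝ[X]) (r L : ℝ) : Prop :=
  Tendsto (truncIntegral (cauchyIntegrand p r) r) (𝓝[>] 0) (𝓝 L)

theorem continuousOn_cauchyIntegrand (p : ℝ[X]) (r : ℝ) :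
    ContinuousOn (cauchyIntegrand p r) {r}ᶜ :=
  ContinuousOn.div (by fun_prop) (by fun_prop) fun _ hs => sub_ne_zero.2 hs

namespace HasCauchyPV

variable {p q : ℝ[X]} {r L M : ℝ}

theorem add (hr : r ∈ Ioo (-1 : ℝ) 1) (hp : HasCauchyPV p r L) (hq : HasCauchyPV q r M) :
    HasCauchyPV (p + q) r (L + M) := by
  refine (Tendsto.add hp hq).congr' ?_
  filter_upwards [self_mem_nhdsWithin] with ε hε
  rw [← truncIntegral_add hr hε (continuousOn_cauchyIntegrand p r)
    (continuousOn_cauchyIntegrand q r)]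
  congr 1
  ext s
  simp only [cauchyIntegrand, Pi.add_apply, eval_add, add_mul, add_div]

theorem smul (c : ℝ) (hp : HasCauchyPV p r L) : HasCauchyPV (c • p) r (c * L) := by
  refine (hp.const_mul c).congr fun ε => ?_
  rw [← truncIntegral_const_mul]
  congr 1
  ext s
  simp only [cauchyIntegrand, eval_smul, smul_eq_mul, mul_assoc, mul_div_assoc]

theorem sub (hr : r ∈ Ioo (-1 : ℝ) 1) (hp : HasCauchyPV p r L) (hq : HasCauchyPV q r M) :
    HasCauchyPV (p - q) r (L - M) := by
  simpa [sub_eq_add_neg] using hp.add hr (hq.smul (-1))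

theorem X_mul (hr : r ∈ Ioo (-1 : ℝ) 1) (hp : HasCauchyPV p r L) :
    HasCauchyPV (X * p) r ((∫ s in (-1 : ℝ)..1, p.eval s * √(1 - s ^ 2)) + r * L) := by
  have hw : Continuous fun s => p.eval s * √(1 - s ^ 2) := by fun_prop
  refine ((tendsto_truncIntegral_of_continuous hw r).add (hp.const_mul r)).congr' ?_
  filter_upwards [self_mem_nhdsWithin] with ε hε
  rw [← truncIntegral_const_mul, ← truncIntegral_add (g := fun s => r * cauchyIntegrand p r s)
    hr hε hw.continuousOn (continuousOn_const.mul (continuousOn_cauchyIntegrand p r))]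
  refine truncIntegral_congr hr hε fun s hs => ?_
  have hsr : s - r ≠ 0 := sub_ne_zero.2 hs
  simp only [cauchyIntegrand, Pi.add_apply, eval_mul, eval_X]
  field_simp
  ring

end HasCauchyPV

theorem one_sub_mul_add_sqrt_mul_sqrt_pos {x r : ℝ} (hx : x ∈ Icc (-1 : ℝ) 1)
    (hr : r ∈ Ioo (-1 : ℝ) 1) : 0 < 1 - x * r + √(1 - x ^ 2) * √(1 - r ^ 2) := by
  have hxr : x * r < 1 := by
    have hx' : |x| ≤ 1 := abs_le.2 hx
    have hr' : |r| < 1 := abs_lt.2 hr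
    refine (le_abs_self _).trans_lt ?_
    rw [abs_mul]
    nlinarith [abs_nonneg x, abs_nonneg r]
  nlinarith [mul_nonneg (sqrt_nonneg (1 - x ^ 2)) (sqrt_nonneg (1 - r ^ 2))]

theorem hasDerivAt_primitive_sqrt_one_sub_sq_div_sub {r x : ℝ} (hr : r ∈ Ioo (-1 : ℝ) 1)
    (hx : x ∈ Ioo (-1 : ℝ) 1) (hxr : x ≠ r) :
    HasDerivAt (fun y => (√(1 - y ^ 2) - r * arcsin y
        - √(1 - r ^ 2) * log (1 - y * r + √(1 - y ^ 2) * √(1 - r ^ 2)))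
        + √(1 - r ^ 2) * log (y - r))
      (√(1 - x ^ 2) / (x - r)) x := by
  have hx2 : √(1 - x ^ 2) ^ 2 = 1 - x ^ 2 := sq_sqrt (by nlinarith [hx.1, hx.2])
  have hr2 : √(1 - r ^ 2) ^ 2 = 1 - r ^ 2 := sq_sqrt (by nlinarith [hr.1, hr.2])
  have hw : √(1 - x ^ 2) ≠ 0 := (sqrt_pos.2 (by nlinarith [hx.1, hx.2])).ne'
  have hg := one_sub_mul_add_sqrt_mul_sqrt_pos (Ioo_subset_Icc_self hx) hr
  have hsub : x - r ≠ 0 := sub_ne_zero.2 hxr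
  have hdg : HasDerivAt (fun y => 1 - y * r + √(1 - y ^ 2) * √(1 - r ^ 2))
      (-r + -x / √(1 - x ^ 2) * √(1 - r ^ 2)) x :=
    ((hasDerivAt_mul_const r).const_sub 1).add ((hasDerivAt_sqrt_one_sub_sq hx).mul_const _)
  refine ((((hasDerivAt_sqrt_one_sub_sq hx).sub
      ((hasDerivAt_arcsin (by linarith [hx.1]) (by linarith [hx.2])).const_mul r)).sub
      (((hasDerivAt_log hg.ne').comp x hdg).const_mul _)).add
      (((hasDerivAt_log hsub).comp x ((hasDerivAt_id x).sub_const r)).const_mul _)).congr_deriv ?_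
  field_simp
  linear_combination (x * r - r ^ 2 - √(1 - x ^ 2) * √(1 - r ^ 2)) * hx2
    + (x ^ 2 - x * r + √(1 - x ^ 2) ^ 2) * hr2

theorem hasCauchyPV_one {r : ℝ} (hr : r ∈ Ioo (-1 : ℝ) 1) : HasCauchyPV 1 r (-(π * r)) := by
  set φ : ℝ → ℝ := fun y => √(1 - y ^ 2) - r * arcsin y
    - √(1 - r ^ 2) * log (1 - y * r + √(1 - y ^ 2) * √(1 - r ^ 2))
  have hpos : ∀ y ∈ Icc (-1 : ℝ) 1, 1 - y * r + √(1 - y ^ 2) * √(1 - r ^ 2) ≠ 0 :=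
    fun y hy => (one_sub_mul_add_sqrt_mul_sqrt_pos hy hr).ne'
  have hφ : ContinuousOn φ (Icc (-1) 1) := by fun_prop (disch := assumption)
  have h := tendsto_truncIntegral_of_hasDerivAt_add_log hr (continuousOn_cauchyIntegrand 1 r) hφ
    fun x hx hxr => by
      simpa only [cauchyIntegrand, eval_one, one_mul]
        using hasDerivAt_primitive_sqrt_one_sub_sq_div_sub hr hx hxr
  unfold HasCauchyPV
  convert h using 2
  simp [φ, arcsin_one]
  ring

theorem hasCauchyPV_U {r : ℝ} (hr : r ∈ Ioo (-1 : ℝ) 1) (k : ℕ) :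
    HasCauchyPV (U ℝ k) r (-(π * (T ℝ (k + 1)).eval r)) := by
  induction k using Nat.twoStepInduction with
  | zero => simpa using hasCauchyPV_one hr
  | one =>
    convert ((hasCauchyPV_one hr).X_mul hr).smul 2 using 1
    · rw [Nat.cast_one, U_one, two_smul]
      ring
    · simp [integral_sqrt_one_sub_sq, T_two]
      ring
  | more k ih₀ ih₁ =>
    have h := ((ih₁.X_mul hr).smul 2).sub hr ih₀
    rw [integral_U_mul_sqrt_one_sub_sq k.succ_pos] at h
    convert h using 1
    · push_cast
      rw [U_add_two, two_smul]
      ring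
    · have hT := congr_arg (eval r) (T_add_two ℝ ((k : ℤ) + 1))
      simp only [eval_mul, eval_sub, eval_ofNat, eval_X] at hT
      push_cast
      rw [show (k : ℤ) + 2 + 1 = k + 1 + 2 by ring, hT, show (k : ℤ) + 1 + 1 = k + 2 by ring]
      ring

theorem hasCauchyPV_T {r : ℝ} (hr : r ∈ Ioo (-1 : ℝ) 1) {n : ℕ} (hn : 2 ≤ n) :
    HasCauchyPV (T ℝ n) r (π / 2 * ((T ℝ (n - 1)).eval r - (T ℝ (n + 1)).eval r)) := by
  obtain ⟨m, rfl⟩ := Nat.exists_eq_add_of_le' hn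
  have h := ((hasCauchyPV_U hr (m + 2)).sub hr (hasCauchyPV_U hr m)).smul 2⁻¹
  convert h using 1
  · push_cast
    rw [← two_mul_T_eq_U_sub_U, smul_eq_C_mul, ← mul_assoc, ← C_ofNat, ← Polynomial.C_mul]
    norm_num
  · push_cast
    rw [show (m : ℤ) + 2 - 1 = m + 1 by ring]
    ring

/-- Let `n ≥ 2` and let `F` be the Cauchy principal value
`F(r) = ⨍_{-1}^{1} T_n(s)√(1-s²)/(s-r) ds` on `(-1,1)`. Then `F` is differentiable on
`(-1,1)` with `F'(r) = (π/2) ((n-1) U_{n-2}(r) - (n+1) U_n(r))`, the Hadamard finite-part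
integral `⨎_{-1}^{1} T_n(s)√(1-s²)/(s-r)² ds`. -/
theorem hfp2_T_m1 (n : ℕ) (hn : 2 ≤ n) (F : ℝ → ℝ)
    (hF : ∀ r ∈ Set.Ioo (-1 : ℝ) 1,
      Filter.Tendsto
        (fun ε : ℝ =>
          (∫ s in (-1 : ℝ)..(r - ε),
              (Polynomial.Chebyshev.T ℝ n).eval s * Real.sqrt (1 - s ^ 2) / (s - r)) +
          ∫ s in (r + ε)..(1 : ℝ),
              (Polynomial.Chebyshev.T ℝ n).eval s * Real.sqrt (1 - s ^ 2) / (s - r))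
        (nhdsWithin 0 (Set.Ioi 0)) (nhds (F r))) :
    ∀ r ∈ Set.Ioo (-1 : ℝ) 1,
      HasDerivAt F
        (Real.pi / 2 *
          (((n : ℝ) - 1) * (Polynomial.Chebyshev.U ℝ ((n : ℤ) - 2)).eval r -
           ((n : ℝ) + 1) * (Polynomial.Chebyshev.U ℝ (n : ℤ)).eval r)) r := by
  set P : ℝ[X] := Polynomial.C (π / 2) * (T ℝ (n - 1) - T ℝ (n + 1))
  have hP : ∀ x, P.eval x = π / 2 * ((T ℝ (n - 1)).eval x - (T ℝ (n + 1)).eval x) := by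
    simp [P]
  have hFP : ∀ x ∈ Ioo (-1 : ℝ) 1, F x = P.eval x := fun x hx => by
    rw [hP]
    exact tendsto_nhds_unique (hF x hx) (hasCauchyPV_T hx hn)
  intro r hr
  refine ((P.hasDerivAt r).congr_of_eventuallyEq
    (eventually_of_mem (isOpen_Ioo.mem_nhds hr) hFP)).congr_deriv ?_
  simp [P, T_derivative_eq_U, sub_sub, one_add_one_eq_two]
end

section
/- Let n ≥ 0 be an integer and define F : (−1, 1) → ℝ by F(r) = ⨍_{−1}^{1} U_n(s)·√(1−s²)/(s−r) ds (Cauchy principal value). Then F is differentiable at every r ∈ (−1, 1) and F′(r) = −π·(n+1)·U_n(r). (F′(r) is the Hadamard finite-part integral ⨎_{−1}^{1} U_n(s)·√(1−s²)/(s−r)² ds.) -/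
/-!
On `(-1, 1)` the principal value equals `-π T_{n+1}(r)`, and `T_{n+1}' = (n + 1) U_n`.

For `n = 0` this comes from the explicit primitive
`√(1 - s²) - r arcsin s - √(1 - r²) log ((1 - r s + √(1 - r²) √(1 - s²)) / |s - r|)`,
whose logarithmic singularities at `r ± ε` cancel. Writing `2 s = 2 (s - r) + 2 r` in
`U_{m+2} = 2 X U_{m+1} - U_m` turns the principal value for `U_{m+2}` into those for `U_{m+1}`,
`U_m` and the ordinary integral `∫ U_{m+1} √(1 - s²)`. That integral is `π / 2` for `m + 1 = 0`
and vanishes otherwise, because `2 (1 - s²) U_k = T_k - T_{k+2}` and `∫ T_j dx / √(1 - x²) = 0`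
for `j ≠ 0`; the recurrence of `T` then finishes the induction.
-/

open Real Filter Set Topology Polynomial Polynomial.Chebyshev intervalIntegral MeasureTheory

noncomputable def pvTrunc (f : ℝ → ℝ) (r ε : ℝ) : ℝ :=
  (∫ s in (-1)..(r - ε), f s) + ∫ s in (r + ε)..1, f s

lemma tendsto_pvTrunc_of_continuous {g : ℝ → ℝ} (hg : Continuous g) (r : ℝ) :
    Tendsto (pvTrunc g r) (𝓝[>] 0) (𝓝 (∫ s in (-1)..1, g s)) := by
  have hint : ∀ a b, IntervalIntegrable g volume a b := hg.intervalIntegrable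
  set P : ℝ → ℝ := fun b => ∫ s in (-1)..b, g s
  have hP : Continuous P := continuous_primitive hint (-1)
  have hlim : Tendsto (fun ε => (∫ s in (-1)..1, g s) + (P (r - ε) - P (r + ε))) (𝓝[>] 0)
      (𝓝 ((∫ s in (-1)..1, g s) + (P (r - 0) - P (r + 0)))) :=
    (((hP.comp (continuous_sub_left r)).sub (hP.comp (continuous_const_add r))).tendsto 0
      |>.mono_left nhdsWithin_le_nhds).const_add _
  simp only [sub_zero, add_zero, sub_self] at hlim
  refine hlim.congr fun ε => ?_
  rw [pvTrunc, ← integral_interval_sub_left (hint (-1) 1) (hint (-1) (r + ε))]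
  ring

lemma intervalIntegrable_div_sub {g : ℝ → ℝ} (hg : Continuous g) {r a b : ℝ}
    (h : r ∉ uIcc a b) : IntervalIntegrable (fun s => g s / (s - r)) volume a b :=
  ContinuousOn.intervalIntegrable <| hg.continuousOn.div (by fun_prop)
    fun s hs => sub_ne_zero.2 fun hsr => h (hsr ▸ hs)

-- `Real.log` is even, so `log (x - r)` is `log |x - r|`: the singular terms at `r ± ε` cancel.
lemma tendsto_pvTrunc_of_hasDerivAt {f K : ℝ → ℝ} {c r : ℝ} (hr : r ∈ Ioo (-1) 1)
    (hK : ContinuousOn K (Icc (-1) 1)) (hf : ContinuousOn f {r}ᶜ)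
    (hderiv : ∀ s ∈ Ioo (-1) 1, s ≠ r → HasDerivAt (fun x => K x + c * log (x - r)) (f s) s) :
    Tendsto (pvTrunc f r) (𝓝[>] 0) (𝓝 (K 1 - K (-1) + c * (log (1 - r) - log (1 + r)))) := by
  set H : ℝ → ℝ := fun x => K x + c * log (x - r)
  have hFTC : ∀ a b, -1 ≤ a → a ≤ b → b ≤ 1 → r ∉ Icc a b → ∫ s in a..b, f s = H b - H a := by
    intro a b ha hab hb hrab
    have hsub : Icc a b ⊆ Icc (-1) 1 \ {r} := fun x hx =>
      ⟨⟨ha.trans hx.1, hx.2.trans hb⟩, fun h => hrab (h ▸ hx)⟩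
    refine integral_eq_sub_of_hasDerivAt_of_le hab ?_ (fun x hx => ?_)
      ((hf.mono fun x hx => (hsub hx).2).intervalIntegrable_of_Icc hab)
    · exact (hK.mono (hsub.trans sdiff_subset)).add <| continuousOn_const.mul <|
        (continuousOn_id.sub continuousOn_const).log fun x hx => sub_ne_zero.2 (hsub hx).2
    · exact hderiv x ⟨ha.trans_lt hx.1, hx.2.trans_le hb⟩ (hsub (Ioo_subset_Icc_self hx)).2
  have hKr : ContinuousAt K r := hK.continuousAt (Icc_mem_nhds hr.1 hr.2)
  have hlim : Tendsto (fun ε => K 1 - K (-1) + c * (log (1 - r) - log (1 + r)) +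
      (K (r - ε) - K (r + ε))) (𝓝[>] 0)
      (𝓝 (K 1 - K (-1) + c * (log (1 - r) - log (1 + r)) + (K r - K r))) := by
    refine Tendsto.const_add _ (Tendsto.sub ?_ ?_) <;> refine hKr.tendsto.comp ?_
    · simpa using ((continuous_sub_left r).tendsto 0).mono_left nhdsWithin_le_nhds
    · simpa using ((continuous_const_add r).tendsto 0).mono_left nhdsWithin_le_nhds
  rw [sub_self, add_zero] at hlim
  refine hlim.congr' ?_
  filter_upwards [Ioo_mem_nhdsGT (lt_min (sub_pos.2 hr.2) (neg_lt_iff_pos_add'.1 hr.1))]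
    with ε ⟨hε, hεr⟩
  have h1 : ε < 1 - r := hεr.trans_le (min_le_left _ _)
  have h2 : ε < 1 + r := hεr.trans_le (min_le_right _ _)
  rw [pvTrunc, hFTC (-1) (r - ε) le_rfl (by linarith) (by linarith) (fun h => by linarith [h.2]),
    hFTC (r + ε) 1 (by linarith) (by linarith) le_rfl (fun h => by linarith [h.1])]
  simp only [H, show r - ε - r = -ε by ring, show -1 - r = -(1 + r) by ring, log_neg_eq_log,
    add_sub_cancel_left]
  ring

-- Adding `√(1 - r ^ 2) * log (s - r)` gives a primitive of `√(1 - s ^ 2) / (s - r)`.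
noncomputable def sqrtCauchyPrimitive (r s : ℝ) : ℝ :=
  √(1 - s ^ 2) - r * arcsin s - √(1 - r ^ 2) * log (1 - r * s + √(1 - r ^ 2) * √(1 - s ^ 2))

lemma one_sub_mul_pos {r s : ℝ} (hr : r ∈ Ioo (-1) 1) (hs : s ∈ Icc (-1) 1) : 0 < 1 - r * s := by
  nlinarith [mul_nonneg (sub_nonneg.2 hs.2) (neg_le_iff_add_nonneg'.1 hr.1.le),
    mul_nonneg (neg_le_iff_add_nonneg'.1 hs.1) (sub_pos.2 hr.2).le, hr.1, hr.2]

lemma continuousOn_sqrtCauchyPrimitive {r : ℝ} (hr : r ∈ Ioo (-1) 1) :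
    ContinuousOn (sqrtCauchyPrimitive r) (Icc (-1) 1) := by
  unfold sqrtCauchyPrimitive
  refine ContinuousOn.sub (by fun_prop) (ContinuousOn.mul continuousOn_const ?_)
  refine ContinuousOn.log (by fun_prop) fun s hs => ?_
  have := one_sub_mul_pos hr hs
  positivity

lemma hasDerivAt_sqrtCauchyPrimitive {r s : ℝ} (hr : r ∈ Ioo (-1) 1) (hs : s ∈ Ioo (-1) 1)
    (hsr : s ≠ r) :
    HasDerivAt (fun x => sqrtCauchyPrimitive r x + √(1 - r ^ 2) * log (x - r))
      (√(1 - s ^ 2) / (s - r)) s := by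
  have hs2 : 0 < 1 - s ^ 2 := by nlinarith [hs.1, hs.2]
  have hsqrt : HasDerivAt (fun x => √(1 - x ^ 2)) (-s / √(1 - s ^ 2)) s := by
    refine (((hasDerivAt_pow 2 s).const_sub 1).sqrt hs2.ne').congr_deriv ?_
    field_simp
    ring
  have hasin := hasDerivAt_arcsin hs.1.ne' hs.2.ne
  have hN : 0 < 1 - r * s + √(1 - r ^ 2) * √(1 - s ^ 2) := by
    have := one_sub_mul_pos hr (Ioo_subset_Icc_self hs)
    positivity
  have hlogN := ((((hasDerivAt_id s).const_mul r).const_sub 1).add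
    (hsqrt.const_mul √(1 - r ^ 2))).log hN.ne'
  have hlog := ((hasDerivAt_id s).sub_const r).log (sub_ne_zero.2 hsr)
  refine (((hsqrt.sub (hasin.const_mul r)).sub (hlogN.const_mul √(1 - r ^ 2))).add
    (hlog.const_mul √(1 - r ^ 2))).congr_deriv ?_
  have ha2 : √(1 - r ^ 2) ^ 2 = 1 - r ^ 2 := sq_sqrt (by nlinarith [hr.1, hr.2])
  have hb2 : √(1 - s ^ 2) ^ 2 = 1 - s ^ 2 := sq_sqrt hs2.le
  have hb : 0 < √(1 - s ^ 2) := sqrt_pos.2 hs2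
  simp only [Pi.add_apply, id]
  generalize √(1 - r ^ 2) = a at *
  generalize √(1 - s ^ 2) = b at *
  have hN' : 1 - s * r + b * a ≠ 0 := by linarith
  field_simp
  linear_combination (a ^ 2 - (1 - s * r + b * a)) * hb2 + (1 - s * r) * ha2

lemma tendsto_pvTrunc_sqrt_div {r : ℝ} (hr : r ∈ Ioo (-1) 1) :
    Tendsto (pvTrunc (fun s => √(1 - s ^ 2) / (s - r)) r) (𝓝[>] 0) (𝓝 (-π * r)) := by
  convert tendsto_pvTrunc_of_hasDerivAt hr (continuousOn_sqrtCauchyPrimitive hr)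
    (by fun_prop (disch := exact fun s hs => sub_ne_zero.2 hs))
    fun s hs hsr => hasDerivAt_sqrtCauchyPrimitive hr hs hsr using 2
  simp [sqrtCauchyPrimitive]
  ring

lemma two_mul_one_sub_sq_mul_eval_U (m : ℤ) (x : ℝ) :
    2 * (1 - x ^ 2) * (U ℝ m).eval x = (T ℝ m).eval x - (T ℝ (m + 2)).eval x := by
  have h := congrArg (eval x) (one_sub_X_sq_mul_U_eq_pol_in_T ℝ m)
  have hT := congrArg (eval x) (T_add_two ℝ m)
  simp only [eval_mul, eval_sub, eval_pow, eval_one, eval_X, eval_ofNat] at h hT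
  linear_combination 2 * h - hT

lemma integral_eval_U_mul_sqrt (m : ℤ) :
    ∫ s in (-1)..1, (U ℝ m).eval s * √(1 - s ^ 2) =
      ((∫ x, (T ℝ m).eval x ∂measureT) - ∫ x, (T ℝ (m + 2)).eval x ∂measureT) / 2 := by
  have hpt : ∀ x : ℝ, (U ℝ m).eval x * √(1 - x ^ 2) =
      ((T ℝ m).eval x - (T ℝ (m + 2)).eval x) / 2 * √(1 - x ^ 2)⁻¹ := by
    intro x
    rcases le_or_gt (1 - x ^ 2) 0 with hx | hx
    · simp [sqrt_eq_zero'.2 hx]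
    · rw [sqrt_inv, ← two_mul_one_sub_sq_mul_eval_U]
      have hsq := sq_sqrt hx.le
      have hne := (sqrt_pos.2 hx).ne'
      field_simp
      linear_combination (U ℝ m).eval x * hsq
  have hint : ∀ k : ℤ, Integrable (fun x => (T ℝ k).eval x) measureT :=
    fun k => integrable_measureT (by fun_prop)
  rw [integral_congr fun x _ => hpt x, ← integral_measureT, MeasureTheory.integral_div,
    MeasureTheory.integral_sub (hint _) (hint _)]

lemma integral_eval_U_zero_mul_sqrt : ∫ s in (-1)..1, (U ℝ 0).eval s * √(1 - s ^ 2) = π / 2 := by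
  rw [integral_eval_U_mul_sqrt, integral_eval_T_real_measureT_zero,
    integral_eval_T_real_measureT_of_ne_zero (by norm_num), sub_zero]

lemma integral_eval_U_mul_sqrt_of_pos {m : ℤ} (hm : 0 < m) :
    ∫ s in (-1)..1, (U ℝ m).eval s * √(1 - s ^ 2) = 0 := by
  rw [integral_eval_U_mul_sqrt, integral_eval_T_real_measureT_of_ne_zero hm.ne',
    integral_eval_T_real_measureT_of_ne_zero (by omega), sub_zero, zero_div]

lemma integral_eval_U_add_two_mul_sqrt_div (m : ℤ) {r a b : ℝ} (h : r ∉ uIcc a b) :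
    ∫ s in a..b, (U ℝ (m + 2)).eval s * √(1 - s ^ 2) / (s - r) =
      2 * (∫ s in a..b, (U ℝ (m + 1)).eval s * √(1 - s ^ 2)) +
      2 * r * (∫ s in a..b, (U ℝ (m + 1)).eval s * √(1 - s ^ 2) / (s - r)) -
      ∫ s in a..b, (U ℝ m).eval s * √(1 - s ^ 2) / (s - r) := by
  have hdiv : ∀ k : ℤ, IntervalIntegrable (fun s => (U ℝ k).eval s * √(1 - s ^ 2) / (s - r))
      volume a b := fun k => intervalIntegrable_div_sub (by fun_prop) h
  have hw : IntervalIntegrable (fun s => (U ℝ (m + 1)).eval s * √(1 - s ^ 2)) volume a b :=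
    Continuous.intervalIntegrable (by fun_prop) _ _
  rw [← intervalIntegral.integral_const_mul, ← intervalIntegral.integral_const_mul,
    ← integral_add (hw.const_mul _) ((hdiv _).const_mul _),
    ← integral_sub ((hw.const_mul _).add ((hdiv _).const_mul _)) (hdiv _)]
  refine integral_congr fun s hs => ?_
  have hsr : s - r ≠ 0 := sub_ne_zero.2 fun hsr => h (hsr ▸ hs)
  simp only [U_add_two, eval_sub, eval_mul, eval_ofNat, eval_X]
  field_simp
  ring

lemma tendsto_pvTrunc_eval_U_add_two {m : ℤ} {r A B : ℝ} (hr : r ∈ Ioo (-1) 1)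
    (hA : Tendsto (pvTrunc (fun s => (U ℝ m).eval s * √(1 - s ^ 2) / (s - r)) r) (𝓝[>] 0)
      (𝓝 A))
    (hB : Tendsto (pvTrunc (fun s => (U ℝ (m + 1)).eval s * √(1 - s ^ 2) / (s - r)) r)
      (𝓝[>] 0) (𝓝 B)) :
    Tendsto (pvTrunc (fun s => (U ℝ (m + 2)).eval s * √(1 - s ^ 2) / (s - r)) r) (𝓝[>] 0)
      (𝓝 (2 * (∫ s in (-1)..1, (U ℝ (m + 1)).eval s * √(1 - s ^ 2)) + 2 * r * B - A)) := by
  refine ((((tendsto_pvTrunc_of_continuous (by fun_prop) r).const_mul 2).add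
    (hB.const_mul (2 * r))).sub hA).congr' ?_
  filter_upwards [self_mem_nhdsWithin] with ε (hε : 0 < ε)
  rw [pvTrunc, pvTrunc, pvTrunc, pvTrunc,
    integral_eval_U_add_two_mul_sqrt_div m (r := r) (a := -1) (b := r - ε)
      (notMem_uIcc_of_gt hr.1 (by linarith)),
    integral_eval_U_add_two_mul_sqrt_div m (r := r) (a := r + ε) (b := 1)
      (notMem_uIcc_of_lt (by linarith) hr.2)]
  ring

lemma tendsto_pvTrunc_eval_U_mul_sqrt_div (n : ℕ) {r : ℝ} (hr : r ∈ Ioo (-1) 1) :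
    Tendsto (pvTrunc (fun s => (U ℝ n).eval s * √(1 - s ^ 2) / (s - r)) r) (𝓝[>] 0)
      (𝓝 (-π * (T ℝ (n + 1)).eval r)) := by
  induction n using Nat.twoStepInduction with
  | zero => simpa using tendsto_pvTrunc_sqrt_div hr
  | one =>
    have hUneg : Tendsto (pvTrunc (fun s => (U ℝ (-1)).eval s * √(1 - s ^ 2) / (s - r)) r)
        (𝓝[>] 0) (𝓝 0) :=
      tendsto_const_nhds.congr fun ε => by simp [pvTrunc, U_neg_one]
    have hUzero : Tendsto (pvTrunc (fun s => (U ℝ (-1 + 1)).eval s * √(1 - s ^ 2) / (s - r)) r)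
        (𝓝[>] 0) (𝓝 (-π * r)) := by
      simpa using tendsto_pvTrunc_sqrt_div hr
    have h := tendsto_pvTrunc_eval_U_add_two hr hUneg hUzero
    rw [neg_add_cancel, integral_eval_U_zero_mul_sqrt, show (-1 : ℤ) + 2 = 1 by norm_num] at h
    rw [Nat.cast_one, show (1 : ℤ) + 1 = 2 by norm_num, T_two]
    convert h using 2
    simp
    ring
  | more n ih₀ ih₁ =>
    push_cast at ih₁ ⊢
    convert tendsto_pvTrunc_eval_U_add_two hr ih₀ ih₁ using 2
    rw [integral_eval_U_mul_sqrt_of_pos (by omega), show (n : ℤ) + 2 + 1 = n + 1 + 2 by ring,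
      T_add_two]
    simp
    ring

lemma hasDerivAt_eval_T (n : ℤ) (x : ℝ) :
    HasDerivAt (fun y => (T ℝ n).eval y) (n * (U ℝ (n - 1)).eval x) x := by
  simpa [T_derivative_eq_U] using (T ℝ n).hasDerivAt x

/-- Let `n ≥ 0` and let `F` be the Cauchy principal value
`F(r) = ⨍_{-1}^{1} U_n(s)√(1-s²)/(s-r) ds` on `(-1,1)`. Then `F` is differentiable on
`(-1,1)` with `F'(r) = -π (n+1) U_n(r)`, the Hadamard finite-part integral
`⨎_{-1}^{1} U_n(s)√(1-s²)/(s-r)² ds`. -/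
theorem hfp2_U_m1 (n : ℕ) (F : ℝ → ℝ)
    (hF : ∀ r ∈ Set.Ioo (-1 : ℝ) 1,
      Filter.Tendsto
        (fun ε : ℝ =>
          (∫ s in (-1 : ℝ)..(r - ε),
              (Polynomial.Chebyshev.U ℝ n).eval s * Real.sqrt (1 - s ^ 2) / (s - r)) +
          ∫ s in (r + ε)..(1 : ℝ),
              (Polynomial.Chebyshev.U ℝ n).eval s * Real.sqrt (1 - s ^ 2) / (s - r))
        (nhdsWithin 0 (Set.Ioi 0)) (nhds (F r))) :
    ∀ r ∈ Set.Ioo (-1 : ℝ) 1,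
      HasDerivAt F
        (-Real.pi * ((n : ℝ) + 1) * (Polynomial.Chebyshev.U ℝ (n : ℤ)).eval r) r := by
  intro r hr
  have hFT : ∀ x ∈ Ioo (-1 : ℝ) 1, F x = -π * (T ℝ (n + 1)).eval x := fun x hx =>
    tendsto_nhds_unique (hF x hx) (tendsto_pvTrunc_eval_U_mul_sqrt_div n hx)
  have hT := ((hasDerivAt_eval_T (n + 1) r).const_mul (-π)).congr_of_eventuallyEq
    (eventually_of_mem (isOpen_Ioo.mem_nhds hr) hFT)
  refine hT.congr_deriv ?_
  rw [add_sub_cancel_right]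
  push_cast
  ring
end
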